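/- arXiv:2406.01206 — 4 statements merged into one kernel-verified Lean document; each statement's English description precedes it below -/
import Mathlib

section
/- Core dissipation inequality of Theorem 1 (Eq. (11)): Let m be a positive integer and ε > 0. Let η, ζ : ℝ → ℝ^m be differentiable curves (η(t) = h_p(x_p(t)) is the plant output trajectory, ζ(t) = h_c(x_c(t)) is the state-dependent part of the controller output trajectory), let g_1, …, g_m : ℝ → ℝ be continuous functions (the channel-wise controller feedthrough), and let V_p, V_c : ℝ → ℝ be differentiable functions (the plant and controller storage functions evaluated along the trajectories). Define the interconnection inputs u_c(t) = η(t) and u_p(t) = ζ(t) + (g_1(η_1(t)), …, g_m(η_m(t))). Assume for all t ∈ ℝ: V_p'(t) ≤ ⟨u_p(t), η'(t)⟩ − ε‖η'(t)‖² (OSNI dissipation of the plant along the trajectory) and V_c'(t) ≤ ⟨u_c(t), ζ'(t)⟩ (NI dissipation of the controller along the trajectory). Then the Lur'e–Postnikov-like function W(t) = V_p(t) + V_c(t) − ⟨η(t), ζ(t)⟩ − Σ_{k=1}^m ∫_0^{η_k(t)} g_k(ξ) dξ is differentiable at every t and satisfies W'(t) ≤ −ε‖η'(t)‖² ≤ 0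 for all t ∈ ℝ. -/
/-!
Along the trajectory, `d/dt ⟪η, ζ⟫ = ⟪η, ζ'⟫ + ⟪η', ζ⟫` and, by the fundamental theorem of calculus,
the integral term has derivative `∑ₖ gₖ(ηₖ) ηₖ'`. These are exactly the cross terms that appear in
the supply rates once the interconnection `u_p = ζ + g(η)`, `u_c = η` is substituted, so adding the
two dissipation inequalities leaves only `-ε ‖η'‖²`.
-/

open scoped RealInnerProductSpace

section

variable {ι : Type*} [Fintype ι]

theorem hasDerivAt_sum_integral_comp {g : ι → ℝ → ℝ} (hg : ∀ k, Continuous (g k))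
    {η : ℝ → EuclideanSpace ℝ ι} {η' : EuclideanSpace ℝ ι} {t : ℝ} (hη : HasDerivAt η η' t) :
    HasDerivAt (fun s => ∑ k, ∫ ξ in (0 : ℝ)..η s k, g k ξ) (∑ k, g k (η t k) * η' k) t := by
  refine HasDerivAt.fun_sum fun k _ => ?_
  have hηk : HasDerivAt (fun s => η s k) (η' k) t :=
    (EuclideanSpace.proj (𝕜 := ℝ) k).hasFDerivAt.comp_hasDerivAt t hη
  exact ((hg k).integral_hasStrictDerivAt 0 (η t k)).hasDerivAt.comp t hηk

theorem inner_eq_inner_add_sum_mul {u a : EuclideanSpace ℝ ι} {b : ι → ℝ}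
    (hu : ∀ k, u k = a k + b k) (v : EuclideanSpace ℝ ι) :
    ⟪u, v⟫ = ⟪a, v⟫ + ∑ k, b k * v k := by
  simp only [PiLp.inner_apply, RCLike.inner_apply, starRingEnd_apply, star_trivial, hu,
    ← Finset.sum_add_distrib]
  exact Finset.sum_congr rfl fun k _ => by ring

end

theorem stmt_0_general (m : ℕ) (ε : ℝ) (hε : 0 < ε)
    (η ζ η' ζ' : ℝ → EuclideanSpace ℝ (Fin m))
    (hη : ∀ t, HasDerivAt η (η' t) t)
    (hζ : ∀ t, HasDerivAt ζ (ζ' t) t)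
    (g : Fin m → ℝ → ℝ) (hg : ∀ k, Continuous (g k))
    (Vp Vc Vp' Vc' : ℝ → ℝ)
    (hVp : ∀ t, HasDerivAt Vp (Vp' t) t)
    (hVc : ∀ t, HasDerivAt Vc (Vc' t) t)
    (uc up : ℝ → EuclideanSpace ℝ (Fin m))
    (huc : ∀ t, uc t = η t)
    (hup : ∀ t k, up t k = ζ t k + g k (η t k))
    (hOSNI : ∀ t, Vp' t ≤ ⟪up t, η' t⟫ - ε * ‖η' t‖ ^ 2)
    (hNI : ∀ t, Vc' t ≤ ⟪uc t, ζ' t⟫) :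
    ∀ t : ℝ, ∃ w : ℝ,
      HasDerivAt
        (fun s => Vp s + Vc s - ⟪η s, ζ s⟫ -
          ∑ k : Fin m, ∫ ξ in (0:ℝ)..(η s k), g k ξ) w t ∧
      w ≤ -ε * ‖η' t‖ ^ 2 ∧ -ε * ‖η' t‖ ^ 2 ≤ 0 := by
  intro t
  refine ⟨_, (((hVp t).add (hVc t)).sub ((hη t).inner ℝ (hζ t))).sub
    (hasDerivAt_sum_integral_comp hg (hη t)), ?_, by nlinarith [sq_nonneg ‖η' t‖]⟩
  have hplant := hOSNI t
  have hcontroller := hNI t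
  rw [inner_eq_inner_add_sum_mul (hup t), real_inner_comm] at hplant
  rw [huc t] at hcontroller
  linarith

/-- Core dissipation inequality of Theorem 1 (Eq. (11)). -/
theorem stmt_0 (m : ℕ) (hm : 0 < m) (ε : ℝ) (hε : 0 < ε)
    (η ζ η' ζ' : ℝ → EuclideanSpace ℝ (Fin m))
    (hη : ∀ t, HasDerivAt η (η' t) t)
    (hζ : ∀ t, HasDerivAt ζ (ζ' t) t)
    (g : Fin m → ℝ → ℝ) (hg : ∀ k, Continuous (g k))
    (Vp Vc Vp' Vc' : ℝ → ℝ)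
    (hVp : ∀ t, HasDerivAt Vp (Vp' t) t)
    (hVc : ∀ t, HasDerivAt Vc (Vc' t) t)
    (uc up : ℝ → EuclideanSpace ℝ (Fin m))
    (huc : ∀ t, uc t = η t)
    (hup : ∀ t k, up t k = ζ t k + g k (η t k))
    (hOSNI : ∀ t, Vp' t ≤ ⟪up t, η' t⟫ - ε * ‖η' t‖ ^ 2)
    (hNI : ∀ t, Vc' t ≤ ⟪uc t, ζ' t⟫) :
    ∀ t : ℝ, ∃ w : ℝ,
      HasDerivAt
        (fun s => Vp s + Vc s - ⟪η s, ζ s⟫ -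
          ∑ k : Fin m, ∫ ξ in (0:ℝ)..(η s k), g k ξ) w t ∧
      w ≤ -ε * ‖η' t‖ ^ 2 ∧ -ε * ‖η' t‖ ^ 2 ≤ 0 :=
  stmt_0_general m ε hε η ζ η' ζ' hη hζ g hg Vp Vc Vp' Vc' hVp hVc uc up huc hup hOSNI hNI
end

section
/- Core dissipation inequality of Theorem 2: Let m be a positive integer and ε > 0. Let η, ζ : ℝ → ℝ^m be differentiable curves (η(t) = h_p(x_p(t)) is the plant output trajectory, ζ(t) = h_c(x_c(t)) is the state-dependent part of the controller output trajectory), let g_1, …, g_m : ℝ → ℝ be continuous functions (the channel-wise controller feedthrough), and let V_p, V_c : ℝ → ℝ be differentiable functions (storage functions along the trajectories). Define u_c(t) = η(t) and u_p(t) = ζ(t) + (g_1(η_1(t)), …, g_m(η_m(t))). Assume for all t ∈ ℝ: V_p'(t) ≤ ⟨u_p(t), η'(t)⟩ (NI dissipation of the plant) and V_c'(t) ≤ ⟨u_c(t), ζ'(t)⟩ − ε‖ζ'(t)‖² (OSNI dissipation of the controller). Then W(t) = V_p(t) + V_c(t) − ⟨η(t), ζ(t)⟩ − Σ_{k=1}^m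 ∫_0^{η_k(t)} g_k(ξ) dξ is differentiable at every t and satisfies W'(t) ≤ −ε‖ζ'(t)‖² ≤ 0 for all t ∈ ℝ. -/
/-!
The candidate Lyapunov function `W = V_p + V_c - ⟪η, ζ⟫ - ∑ₖ ∫₀^{ηₖ} gₖ` is differentiated
term by term (product rule for the cross term, the fundamental theorem of calculus and the chain
rule for the feedthrough potentials). Since `u_p = ζ + g(η)` and `u_c = η`, adding the two
dissipation inequalities gives
`V_p' + V_c' ≤ ⟪ζ, η'⟫ + ∑ₖ gₖ(ηₖ) ηₖ' + ⟪η, ζ'⟫ - ε ‖ζ'‖²`,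
and the first three terms are exactly the derivative of the subtracted part of `W`.
-/

open scoped RealInnerProductSpace

section

variable {ι : Type*} [Fintype ι]

theorem HasDerivAt.euclideanSpace_apply {γ : ℝ → EuclideanSpace ℝ ι} {γ' : EuclideanSpace ℝ ι}
    {t : ℝ} (hγ : HasDerivAt γ γ' t) (k : ι) : HasDerivAt (fun s => γ s k) (γ' k) t :=
  (EuclideanSpace.proj (𝕜 := ℝ) k).hasFDerivAt.comp_hasDerivAt t hγ

theorem HasDerivAt.intervalIntegral_comp {g : ℝ → ℝ} (hg : Continuous g) (a : ℝ) {f : ℝ → ℝ}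
    {f' t : ℝ} (hf : HasDerivAt f f' t) :
    HasDerivAt (fun s => ∫ ξ in a..f s, g ξ) (g (f t) * f') t :=
  (hg.integral_hasStrictDerivAt a (f t)).hasDerivAt.comp t hf

theorem HasDerivAt.sum_intervalIntegral_euclideanSpace_apply {g : ι → ℝ → ℝ}
    (hg : ∀ k, Continuous (g k)) (a : ℝ) {γ : ℝ → EuclideanSpace ℝ ι}
    {γ' : EuclideanSpace ℝ ι} {t : ℝ} (hγ : HasDerivAt γ γ' t) :
    HasDerivAt (fun s => ∑ k, ∫ ξ in a..γ s k, g k ξ) (∑ k, g k (γ t k) * γ' k) t :=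
  HasDerivAt.fun_sum fun k _ => (hγ.euclideanSpace_apply k).intervalIntegral_comp (hg k) a

theorem EuclideanSpace.inner_eq_inner_add_sum {u z v : EuclideanSpace ℝ ι} {c : ι → ℝ}
    (hu : ∀ k, u k = z k + c k) : ⟪u, v⟫ = ⟪z, v⟫ + ∑ k, c k * v k := by
  simp only [PiLp.inner_apply, RCLike.inner_apply, conj_trivial, hu, ← Finset.sum_add_distrib]
  exact Finset.sum_congr rfl fun k _ => by ring

end

theorem stmt_1_general (m : ℕ) (ε : ℝ) (hε : 0 < ε)
    (η ζ η' ζ' : ℝ → EuclideanSpace ℝ (Fin m))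
    (hη : ∀ t, HasDerivAt η (η' t) t)
    (hζ : ∀ t, HasDerivAt ζ (ζ' t) t)
    (g : Fin m → ℝ → ℝ) (hg : ∀ k, Continuous (g k))
    (Vp Vc Vp' Vc' : ℝ → ℝ)
    (hVp : ∀ t, HasDerivAt Vp (Vp' t) t)
    (hVc : ∀ t, HasDerivAt Vc (Vc' t) t)
    (uc up : ℝ → EuclideanSpace ℝ (Fin m))
    (huc : ∀ t, uc t = η t)
    (hup : ∀ t k, up t k = ζ t k + g k (η t k))
    (hNI : ∀ t, Vp' t ≤ ⟪up t, η' t⟫)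
    (hOSNI : ∀ t, Vc' t ≤ ⟪uc t, ζ' t⟫ - ε * ‖ζ' t‖ ^ 2) :
    ∀ t : ℝ, ∃ w : ℝ,
      HasDerivAt
        (fun s => Vp s + Vc s - ⟪η s, ζ s⟫ -
          ∑ k : Fin m, ∫ ξ in (0:ℝ)..(η s k), g k ξ) w t ∧
      w ≤ -ε * ‖ζ' t‖ ^ 2 ∧ -ε * ‖ζ' t‖ ^ 2 ≤ 0 := by
  intro t
  refine ⟨_, (((hVp t).add (hVc t)).sub ((hη t).inner ℝ (hζ t))).sub
    ((hη t).sum_intervalIntegral_euclideanSpace_apply hg 0), ?_, ?_⟩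
  · have hplant := hNI t
    have hcontroller := hOSNI t
    rw [EuclideanSpace.inner_eq_inner_add_sum (hup t)] at hplant
    rw [huc] at hcontroller
    rw [real_inner_comm (ζ t) (η' t)]
    linarith
  · have : 0 ≤ ε * ‖ζ' t‖ ^ 2 := by positivity
    linarith

/-- Core dissipation inequality of Theorem 2: NI plant with OSNI controller. -/
theorem stmt_1 (m : ℕ) (hm : 0 < m) (ε : ℝ) (hε : 0 < ε)
    (η ζ η' ζ' : ℝ → EuclideanSpace ℝ (Fin m))
    (hη : ∀ t, HasDerivAt η (η' t) t)
    (hζ : ∀ t, HasDerivAt ζ (ζ' t) t)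
    (g : Fin m → ℝ → ℝ) (hg : ∀ k, Continuous (g k))
    (Vp Vc Vp' Vc' : ℝ → ℝ)
    (hVp : ∀ t, HasDerivAt Vp (Vp' t) t)
    (hVc : ∀ t, HasDerivAt Vc (Vc' t) t)
    (uc up : ℝ → EuclideanSpace ℝ (Fin m))
    (huc : ∀ t, uc t = η t)
    (hup : ∀ t k, up t k = ζ t k + g k (η t k))
    (hNI : ∀ t, Vp' t ≤ ⟪up t, η' t⟫)
    (hOSNI : ∀ t, Vc' t ≤ ⟪uc t, ζ' t⟫ - ε * ‖ζ' t‖ ^ 2) :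
    ∀ t : ℝ, ∃ w : ℝ,
      HasDerivAt
        (fun s => Vp s + Vc s - ⟪η s, ζ s⟫ -
          ∑ k : Fin m, ∫ ξ in (0:ℝ)..(η s k), g k ξ) w t ∧
      w ≤ -ε * ‖ζ' t‖ ^ 2 ∧ -ε * ‖ζ' t‖ ^ 2 ≤ 0 :=
  stmt_1_general m ε hε η ζ η' ζ' hη hζ g hg Vp Vc Vp' Vc' hVp hVc uc up huc hup hNI hOSNI
end

section
/- Lyapunov dissipation for the interconnected swing equations (core computation of Theorem 5): Let N, L be positive integers and Q an N × L real matrix (the incidence matrix of the transmission network). For each bus i let M_i > 0 and D_i > 0, and let δ_i : ℝ → ℝ be twice differentiable (the rotor angle deviation). For each line l let P̄_l > 0 and ψ̄_l ∈ ℝ. Define the line angle deviations ψ̃_l(t) = Σ_{i=1}^N Q_{il} δ_i(t) and the line outputs y_l(t) = P̄_l (sin ψ̄_l − sin(ψ̃_l(t) + ψ̄_l)). Assume the interconnected swing dynamics M_i δ_i''(t) + D_i δ_i'(t) = Σ_{l=1}^L Q_{il} y_l(t) hold for all i and all t. Then the function W(t) = Σ_{i=1}^N (M_i/2) δ_i'(t)²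 + Σ_{l=1}^L P̄_l ( cos ψ̄_l − ψ̃_l(t) sin ψ̄_l − cos(ψ̃_l(t) + ψ̄_l) ) is differentiable at every t with derivative W'(t) = − Σ_{i=1}^N D_i δ_i'(t)² ≤ 0. -/
/-!
The line potential `P (cos ψ̄ - x sin ψ̄ - cos (x + ψ̄))` has derivative `-y` in `x`, so along a
trajectory the potential part of `W` changes at rate `-∑ₗ ψ̃ₗ' yₗ`. As `ψ̃' = Qᵀ δ'`, this equals
`-∑ᵢ δᵢ' (Q y)ᵢ = -∑ᵢ δᵢ' (Mᵢ δᵢ'' + Dᵢ δᵢ')`, which cancels the kinetic rate `∑ᵢ Mᵢ δᵢ' δᵢ''` and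
leaves the damping term `-∑ᵢ Dᵢ δᵢ'²`.
-/

open Real

noncomputable def linePotential (p ψ x : ℝ) : ℝ := p * (cos ψ - x * sin ψ - cos (x + ψ))

noncomputable def lineOutput (p ψ x : ℝ) : ℝ := p * (sin ψ - sin (x + ψ))

theorem hasDerivAt_linePotential (p ψ x : ℝ) :
    HasDerivAt (linePotential p ψ) (-lineOutput p ψ x) x := by
  refine ((((hasDerivAt_const x (cos ψ)).fun_sub ((hasDerivAt_id' x).mul_const (sin ψ))).fun_sub
    ((hasDerivAt_id' x).add_const ψ).cos).const_mul p).congr_deriv ?_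
  rw [lineOutput]
  ring

theorem HasDerivAt.sum_half_mul_sq {ι : Type*} [Fintype ι] {v a : ι → ℝ → ℝ} {t : ℝ}
    (m : ι → ℝ) (hv : ∀ i, HasDerivAt (v i) (a i t) t) :
    HasDerivAt (fun s => ∑ i, m i / 2 * v i s ^ 2) (∑ i, m i * v i t * a i t) t := by
  refine HasDerivAt.fun_sum fun i _ => (((hv i).pow 2).const_mul (m i / 2)).congr_deriv ?_
  push_cast
  ring

theorem sum_sum_mul_eq_sum_mul_sum {R ι κ : Type*} [CommSemiring R] [Fintype ι] [Fintype κ]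
    (Q : ι → κ → R) (v : ι → R) (w : κ → R) :
    ∑ l, (∑ i, Q i l * v i) * w l = ∑ i, v i * ∑ l, Q i l * w l := by
  simp only [Finset.sum_mul, Finset.mul_sum]
  rw [Finset.sum_comm]
  exact Finset.sum_congr rfl fun _ _ => Finset.sum_congr rfl fun _ _ => by ring

theorem stmt_4_general (N L : ℕ)
    (Q : Matrix (Fin N) (Fin L) ℝ)
    (M D : Fin N → ℝ) (hD : ∀ i, 0 < D i)
    (δ δ' δ'' : Fin N → ℝ → ℝ)
    (hδ : ∀ i t, HasDerivAt (δ i) (δ' i t) t)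
    (hδ' : ∀ i t, HasDerivAt (δ' i) (δ'' i t) t)
    (P ψ : Fin L → ℝ)
    (ψt : Fin L → ℝ → ℝ)
    (hψt : ∀ l t, ψt l t = ∑ i : Fin N, Q i l * δ i t)
    (y : Fin L → ℝ → ℝ)
    (hy : ∀ l t, y l t = P l * (sin (ψ l) - sin (ψt l t + ψ l)))
    (hswing : ∀ i t, M i * δ'' i t + D i * δ' i t = ∑ l : Fin L, Q i l * y l t) :
    ∀ t : ℝ,
      HasDerivAt
        (fun s => (∑ i : Fin N, M i / 2 * (δ' i s) ^ 2) +
          ∑ l : Fin L, P l * (cos (ψ l) - ψt l s * sin (ψ l) - cos (ψt l s + ψ l)))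
        (-∑ i : Fin N, D i * (δ' i t) ^ 2) t ∧
      (-∑ i : Fin N, D i * (δ' i t) ^ 2) ≤ 0 := by
  intro t
  have hψt' : ∀ l, HasDerivAt (ψt l) (∑ i, Q i l * δ' i t) t := fun l => by
    rw [funext (hψt l)]
    exact HasDerivAt.fun_sum fun i _ => (hδ i t).const_mul _
  have hkinetic := HasDerivAt.sum_half_mul_sq M (hδ' · t)
  have hpotential : HasDerivAt (fun s => ∑ l, linePotential (P l) (ψ l) (ψt l s))
      (∑ l, -y l t * ∑ i, Q i l * δ' i t) t :=
    HasDerivAt.fun_sum fun l _ => by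
      rw [hy, ← lineOutput]
      exact (hasDerivAt_linePotential _ _ _).comp t (hψt' l)
  have hpower : ∑ l, (∑ i, Q i l * δ' i t) * y l t =
      ∑ i, δ' i t * (M i * δ'' i t + D i * δ' i t) := by
    simp only [hswing]
    exact sum_sum_mul_eq_sum_mul_sum Q (δ' · t) (y · t)
  refine ⟨(hkinetic.add hpotential).congr_deriv ?_, ?_⟩
  · simp only [neg_mul, Finset.sum_neg_distrib, mul_comm (y _ t), hpower]
    rw [← sub_eq_add_neg, ← Finset.sum_sub_distrib, ← Finset.sum_neg_distrib]
    exact Finset.sum_congr rfl fun i _ => by ring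
  · exact neg_nonpos_of_nonneg (Finset.sum_nonneg fun i _ => mul_nonneg (hD i).le (sq_nonneg _))

/-- Lyapunov dissipation for the interconnected swing equations
(core computation of Theorem 5). -/
theorem stmt_4 (N L : ℕ) (hN : 0 < N) (hL : 0 < L)
    (Q : Matrix (Fin N) (Fin L) ℝ)
    (M D : Fin N → ℝ) (hM : ∀ i, 0 < M i) (hD : ∀ i, 0 < D i)
    (δ δ' δ'' : Fin N → ℝ → ℝ)
    (hδ : ∀ i t, HasDerivAt (δ i) (δ' i t) t)
    (hδ' : ∀ i t, HasDerivAt (δ' i) (δ'' i t) t)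
    (P ψ : Fin L → ℝ) (hP : ∀ l, 0 < P l)
    (ψt : Fin L → ℝ → ℝ)
    (hψt : ∀ l t, ψt l t = ∑ i : Fin N, Q i l * δ i t)
    (y : Fin L → ℝ → ℝ)
    (hy : ∀ l t, y l t = P l * (sin (ψ l) - sin (ψt l t + ψ l)))
    (hswing : ∀ i t, M i * δ'' i t + D i * δ' i t = ∑ l : Fin L, Q i l * y l t) :
    ∀ t : ℝ,
      HasDerivAt
        (fun s => (∑ i : Fin N, M i / 2 * (δ' i s) ^ 2) +
          ∑ l : Fin L, P l * (cos (ψ l) - ψt l s * sin (ψ l) - cos (ψt l s + ψ l)))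
        (-∑ i : Fin N, D i * (δ' i t) ^ 2) t ∧
      (-∑ i : Fin N, D i * (δ' i t) ^ 2) ≤ 0 :=
  stmt_4_general N L Q M D hD δ δ' δ'' hδ hδ' P ψ ψt hψt y hy hswing
end

section
/- Lyapunov dissipation for the swing network with a battery-based NI edge controller on one line (core computation of Theorem 6): Let N, L be positive integers, Q an N × L real matrix (the incidence matrix), and k ∈ {1,…,L} a distinguished line. For each bus i let M_i > 0, D_i > 0 and δ_i : ℝ → ℝ twice differentiable. For each line l ≠ k let P̄_l > 0 and ψ̄_l ∈ ℝ. Let τ > 0 and K₂ > K₁ > 0, and let x : ℝ → ℝ be differentiable (the controller state on line k). Define ψ̃_l(t) = Σ_{i=1}^N Q_{il} δ_i(t) for every l, the line outputs y_l(t) = P̄_l(sin ψ̄_l − sin(ψ̃_l(t) + ψ̄_l)) for l ≠ k, and y_k(t) = x(t) − K₂ ψ̃_k(t). Assume for all t: τ x'(t) = −x(t) + K₁ ψ̃_k(t) and M_i δ_i''(t) + D_i δ_i'(t) = Σ_{l=1}^L Q_{il} y_l(t) for every i. Then the function W(t) = Σ_{i=1}^N (M_i/2) δ_i'(t)² + Σ_{l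 ≠ k} P̄_l( cos ψ̄_l − ψ̃_l(t) sin ψ̄_l − cos(ψ̃_l(t) + ψ̄_l) ) + x(t)²/(2K₁) − ψ̃_k(t) x(t) + (K₂/2) ψ̃_k(t)² is differentiable at every t with derivative W'(t) = − Σ_{i=1}^N D_i δ_i'(t)² − (τ/K₁) x'(t)² ≤ 0. -/
/-!
Each part of `W` is a storage function for one subsystem. The kinetic energy of the buses
changes at rate `∑ δ̃ᵢ' (Mᵢ δ̃ᵢ'')`, while the line potentials and the controller storage change
at rate `-∑ ψ̃ₗ' yₗ` (for the controller up to the term `-(τ/K₁) x'²`, since `x - K₁ ψ̃ₖ = -τ x'`).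
Because `ψ̃' = Qᵀ δ̃'`, the power delivered by the lines equals the power `∑ δ̃ᵢ' (Q y)ᵢ`
absorbed by the buses, so by the swing equation only the damping terms survive.
-/

open Real Finset

section

variable {ι κ : Type*} [Fintype ι] [Fintype κ]

theorem sum_incidence_mul_eq_sum_mul_incidence (Q : Matrix ι κ ℝ) (v : ι → ℝ) (y : κ → ℝ) :
    ∑ l, (∑ i, Q i l * v i) * y l = ∑ i, v i * ∑ l, Q i l * y l := by
  simp only [sum_mul, mul_sum]
  rw [sum_comm]
  exact sum_congr rfl fun i _ => sum_congr rfl fun l _ => by ring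

theorem swing_power_balance (Q : Matrix ι κ ℝ) (M D v a : ι → ℝ) (y : κ → ℝ)
    (hswing : ∀ i, M i * a i + D i * v i = ∑ l, Q i l * y l) :
    ∑ i, M i * v i * a i - ∑ l, (∑ i, Q i l * v i) * y l = -∑ i, D i * v i ^ 2 := by
  simp only [sum_incidence_mul_eq_sum_mul_incidence, ← hswing, ← sum_sub_distrib,
    ← sum_neg_distrib]
  exact sum_congr rfl fun i _ => by ring

theorem hasDerivAt_kineticEnergy (M : ι → ℝ) {v : ι → ℝ → ℝ} {a : ι → ℝ} {t : ℝ}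
    (hv : ∀ i, HasDerivAt (v i) (a i) t) :
    HasDerivAt (fun s => ∑ i, M i / 2 * v i s ^ 2) (∑ i, M i * v i t * a i) t :=
  HasDerivAt.fun_sum fun i _ =>
    (((hv i).pow 2).const_mul (M i / 2)).congr_deriv (by ring)

end

theorem hasDerivAt_linePotential_s5 (P c : ℝ) {u : ℝ → ℝ} {u' t : ℝ} (hu : HasDerivAt u u' t) :
    HasDerivAt (fun s => P * (cos c - u s * sin c - cos (u s + c)))
      (-(u' * (P * (sin c - sin (u t + c))))) t := by
  have hcos : HasDerivAt (fun s => cos (u s + c)) (-sin (u t + c) * u') t := by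
    simpa using (hu.add_const c).cos
  exact ((((hasDerivAt_const t (cos c)).sub (hu.mul_const (sin c))).sub hcos).const_mul P)
    |>.congr_deriv (by ring)

theorem hasDerivAt_batteryStorage {τ K₁ K₂ : ℝ} (hK₁ : K₁ ≠ 0) {x u : ℝ → ℝ} {x' u' t : ℝ}
    (hx : HasDerivAt x x' t) (hu : HasDerivAt u u' t) (hctrl : τ * x' = -x t + K₁ * u t) :
    HasDerivAt (fun s => x s ^ 2 / (2 * K₁) - u s * x s + K₂ / 2 * u s ^ 2)
      (-(u' * (x t - K₂ * u t)) - τ / K₁ * x' ^ 2) t := by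
  refine ((((hx.pow 2).div_const (2 * K₁)).sub (hu.mul hx)).add
    ((hu.pow 2).const_mul (K₂ / 2))).congr_deriv ?_
  field_simp
  linear_combination 2 * x' * hctrl

theorem stmt_5_general (N L : ℕ)
    (Q : Matrix (Fin N) (Fin L) ℝ) (k : Fin L)
    (M D : Fin N → ℝ) (hD : ∀ i, 0 < D i)
    (δ δ' δ'' : Fin N → ℝ → ℝ)
    (hδ : ∀ i t, HasDerivAt (δ i) (δ' i t) t)
    (hδ' : ∀ i t, HasDerivAt (δ' i) (δ'' i t) t)
    (P ψ : Fin L → ℝ)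
    (τ K₁ K₂ : ℝ) (hτ : 0 < τ) (hK₁ : 0 < K₁)
    (x x' : ℝ → ℝ) (hx : ∀ t, HasDerivAt x (x' t) t)
    (ψt : Fin L → ℝ → ℝ)
    (hψt : ∀ l t, ψt l t = ∑ i : Fin N, Q i l * δ i t)
    (y : Fin L → ℝ → ℝ)
    (hy : ∀ l, l ≠ k → ∀ t, y l t = P l * (sin (ψ l) - sin (ψt l t + ψ l)))
    (hyk : ∀ t, y k t = x t - K₂ * ψt k t)
    (hctrl : ∀ t, τ * x' t = -x t + K₁ * ψt k t)
    (hswing : ∀ i t, M i * δ'' i t + D i * δ' i t = ∑ l : Fin L, Q i l * y l t) :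
    ∀ t : ℝ,
      HasDerivAt
        (fun s => (∑ i : Fin N, M i / 2 * (δ' i s) ^ 2)
          + (∑ l ∈ Finset.univ.erase k,
              P l * (cos (ψ l) - ψt l s * sin (ψ l) - cos (ψt l s + ψ l)))
          + x s ^ 2 / (2 * K₁) - ψt k s * x s + K₂ / 2 * (ψt k s) ^ 2)
        (-(∑ i : Fin N, D i * (δ' i t) ^ 2) - τ / K₁ * (x' t) ^ 2) t ∧
      (-(∑ i : Fin N, D i * (δ' i t) ^ 2) - τ / K₁ * (x' t) ^ 2) ≤ 0 := by
  intro t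
  have hψt' : ∀ l, HasDerivAt (ψt l) (∑ i, Q i l * δ' i t) t := fun l => by
    rw [funext (hψt l)]
    exact HasDerivAt.fun_sum fun i _ => (hδ i t).const_mul (Q i l)
  have hpot : HasDerivAt (fun s => ∑ l ∈ univ.erase k,
      P l * (cos (ψ l) - ψt l s * sin (ψ l) - cos (ψt l s + ψ l)))
      (∑ l ∈ univ.erase k, -((∑ i, Q i l * δ' i t) * y l t)) t :=
    HasDerivAt.fun_sum fun l hl => by
      rw [hy l (ne_of_mem_erase hl) t]
      exact hasDerivAt_linePotential_s5 (P l) (ψ l) (hψt' l)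
  have hW := ((hasDerivAt_kineticEnergy M fun i => hδ' i t).add hpot).add
    (hasDerivAt_batteryStorage (K₂ := K₂) hK₁.ne' (hx t) (hψt' k) (hctrl t))
  have hbal := swing_power_balance Q M D (fun i => δ' i t) (fun i => δ'' i t) (fun l => y l t)
    fun i => hswing i t
  have hlines := sum_erase_add univ (fun l => (∑ i, Q i l * δ' i t) * y l t) (mem_univ k)
  refine ⟨?_, ?_⟩
  · refine (hW.congr_deriv ?_).congr_of_eventuallyEq (.of_forall fun s => ?_)
    · rw [sum_neg_distrib, ← hyk t]
      linear_combination hbal - hlines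
    · simp only [Pi.add_apply]
      ring
  · have hdamp : 0 ≤ ∑ i, D i * δ' i t ^ 2 :=
      sum_nonneg fun i _ => mul_nonneg (hD i).le (sq_nonneg _)
    have hbat : 0 ≤ τ / K₁ * x' t ^ 2 := by positivity
    linarith

/-- Lyapunov dissipation for the swing network with a battery-based NI edge
controller on one distinguished line `k` (core computation of Theorem 6). -/
theorem stmt_5 (N L : ℕ) (hN : 0 < N) (hL : 0 < L)
    (Q : Matrix (Fin N) (Fin L) ℝ) (k : Fin L)
    (M D : Fin N → ℝ) (hM : ∀ i, 0 < M i) (hD : ∀ i, 0 < D i)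
    (δ δ' δ'' : Fin N → ℝ → ℝ)
    (hδ : ∀ i t, HasDerivAt (δ i) (δ' i t) t)
    (hδ' : ∀ i t, HasDerivAt (δ' i) (δ'' i t) t)
    (P ψ : Fin L → ℝ) (hP : ∀ l, l ≠ k → 0 < P l)
    (τ K₁ K₂ : ℝ) (hτ : 0 < τ) (hK₁ : 0 < K₁) (hK₂ : K₁ < K₂)
    (x x' : ℝ → ℝ) (hx : ∀ t, HasDerivAt x (x' t) t)
    (ψt : Fin L → ℝ → ℝ)
    (hψt : ∀ l t, ψt l t = ∑ i : Fin N, Q i l * δ i t)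
    (y : Fin L → ℝ → ℝ)
    (hy : ∀ l, l ≠ k → ∀ t, y l t = P l * (sin (ψ l) - sin (ψt l t + ψ l)))
    (hyk : ∀ t, y k t = x t - K₂ * ψt k t)
    (hctrl : ∀ t, τ * x' t = -x t + K₁ * ψt k t)
    (hswing : ∀ i t, M i * δ'' i t + D i * δ' i t = ∑ l : Fin L, Q i l * y l t) :
    ∀ t : ℝ,
      HasDerivAt
        (fun s => (∑ i : Fin N, M i / 2 * (δ' i s) ^ 2)
          + (∑ l ∈ Finset.univ.erase k,
              P l * (cos (ψ l) - ψt l s * sin (ψ l) - cos (ψt l s + ψ l)))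
          + x s ^ 2 / (2 * K₁) - ψt k s * x s + K₂ / 2 * (ψt k s) ^ 2)
        (-(∑ i : Fin N, D i * (δ' i t) ^ 2) - τ / K₁ * (x' t) ^ 2) t ∧
      (-(∑ i : Fin N, D i * (δ' i t) ^ 2) - τ / K₁ * (x' t) ^ 2) ≤ 0 :=
  stmt_5_general N L Q k M D hD δ δ' δ'' hδ hδ' P ψ τ K₁ K₂ hτ hK₁ x x' hx ψt hψt y hy hyk hctrl
    hswing
end
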